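/- Assume C has full span and let χ : ℝ^C → ℝ^N be the equitable solution, i.e., χ(v) = τ(ψ, γ) for any representation (ψ, γ) of v (this is well-defined by the invariance of the equitable solution across representations). Then χ is linear: χ(v + w) = χ(v) + χ(w) for all games v, w : C → ℝ, and χ(c·v) = c·χ(v) for every scalar c ∈ ℝ. -/

import Mathlib

open Finset
open scoped Classical

/-! Common definitions: games on a collection `C` of coalitions of a finite
player set `N`, MM-games, full span, assignments, representations, the
equitable solution, and the Shapley value. -/

/-- The MM-game `w_S`, as a vector in `ℝ^C`:
`w_S(T) = 1` if `S` meets `T` (i.e. `S ∩ T ≠ ∅`) and `0` if `S` misses `T`. -/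
noncomputable def mmGame {N : Type} [DecidableEq N] (C : Finset (Finset N))
    (S : Finset N) : {T : Finset N // T ∈ C} → ℝ :=
  fun T => if (S ∩ T.1).Nonempty then 1 else 0

/-- `C` has full span: the family of MM-games `{w_S}_{S ∈ C}` is a basis of `ℝ^C`,
i.e. it is linearly independent and spans `ℝ^C`. -/
def FullSpan {N : Type} [DecidableEq N] (C : Finset (Finset N)) : Prop :=
  LinearIndependent ℝ (fun S : {S : Finset N // S ∈ C} => mmGame C S.1) ∧
  Submodule.span ℝ (Set.range fun S : {S : Finset N // S ∈ C} => mmGame C S.1) = ⊤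

/-- The full user-set `ψ⁻¹(k) = {n ∈ N : k ∈ ψ(n)}` of facility `k`. -/
noncomputable def userSet {N K : Type} [Fintype N] (ψ : N → Finset K) (k : K) :
    Finset N :=
  Finset.univ.filter fun n => k ∈ ψ n

/-- `(ψ, γ)` is a representation of the game `v : C → ℝ`.  The set of facilities
is `K = ψ(N) = ⋃_{n ∈ N} ψ(n)` (every facility has a nonempty full user-set);
we require `ψ⁻¹(k) ∈ C` for every facility `k`, and
`v(S) = ∑_{k ∈ ψ(S)} γ(k)` for every `S ∈ C`, where `ψ(S) = ⋃_{n ∈ S} ψ(n)`. -/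
def IsRep {N : Type} [Fintype N] [DecidableEq N] (C : Finset (Finset N))
    (v : {T : Finset N // T ∈ C} → ℝ) {K : Type} (ψ : N → Finset K)
    (γ : K → ℝ) : Prop :=
  (∀ k ∈ Finset.univ.biUnion ψ, userSet ψ k ∈ C) ∧
  ∀ T : {T : Finset N // T ∈ C}, v T = ∑ k ∈ T.1.biUnion ψ, γ k

/-- The equitable solution `τ(ψ, γ) ∈ ℝ^N`:
`τ_n(ψ,γ) = ∑_{k ∈ ψ(n)} γ(k)/|ψ⁻¹(k)|`. -/
noncomputable def tau {N K : Type} [Fintype N] (ψ : N → Finset K) (γ : K → ℝ)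
    (n : N) : ℝ :=
  ∑ k ∈ ψ n, γ k / ((userSet ψ k).card : ℝ)

/-- The Shapley value `φ_n(v)` of a game on all coalitions of `N`
(`v ∅` is understood to be `0`):
`φ_n(v) = ∑_{S ⊆ N∖{n}} (|S|!(|N|−1−|S|)!/|N|!)·(v(S∪{n}) − v(S))`. -/
noncomputable def shapley {N : Type} [Fintype N] [DecidableEq N]
    (v : Finset N → ℝ) (n : N) : ℝ :=
  ∑ S ∈ (Finset.univ.erase n).powerset,
    ((S.card.factorial : ℝ) * ((Fintype.card N - 1 - S.card).factorial : ℝ) /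
      ((Fintype.card N).factorial : ℝ)) * (v (insert n S) - v S)

/-- `C` is a semi-algebra: `N ∈ C`, and `N∖S ∈ C` for every `S ∈ C` with `S ≠ N`. -/
def IsSemiAlgebra {N : Type} [Fintype N] [DecidableEq N]
    (C : Finset (Finset N)) : Prop :=
  Finset.univ ∈ C ∧ ∀ S ∈ C, S ≠ Finset.univ → Finset.univ \ S ∈ C

/-- `C` is hierarchical: its elements can be arranged in a sequence
`S_1, …, S_l` such that for every `k = 2, …, l`, (i) `S_1` meets `S_k`, and
(ii) some `T ∈ C` misses `S_k` and meets each of `S_1, …, S_{k−1}`.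
(Indices are `0, …, l-1` here, with `S_1` the element of index `0`.) -/
def IsHierarchy {N : Type} [DecidableEq N] (C : Finset (Finset N)) : Prop :=
  ∃ (l : ℕ) (hl : 0 < l) (S : Fin l → Finset N),
    Function.Injective S ∧ (∀ k, S k ∈ C) ∧ (∀ T ∈ C, ∃ k, S k = T) ∧
    ∀ k : Fin l, 0 < (k : ℕ) →
      ((S ⟨0, hl⟩ ∩ S k).Nonempty ∧
       ∃ T ∈ C, T ∩ S k = ∅ ∧
         ∀ j : Fin l, (j : ℕ) < (k : ℕ) → (T ∩ S j).Nonempty)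

/-- Players `i` and `j` are symmetric in the game `v : C → ℝ`. -/
def SymmetricPlayers {N : Type} [DecidableEq N] (C : Finset (Finset N))
    (v : {T : Finset N // T ∈ C} → ℝ) (i j : N) : Prop :=
  ∀ T : Finset N, i ∉ T → j ∉ T →
    (insert i T ∈ C ↔ insert j T ∈ C) ∧
    ∀ (hi : insert i T ∈ C) (hj : insert j T ∈ C),
      v ⟨insert i T, hi⟩ = v ⟨insert j T, hj⟩

/-- Player `i` is a dummy in the game `v : C → ℝ`. -/
def DummyPlayer {N : Type} [DecidableEq N] (C : Finset (Finset N))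
    (v : {T : Finset N // T ∈ C} → ℝ) (i : N) : Prop :=
  (∀ h : ({i} : Finset N) ∈ C, v ⟨{i}, h⟩ = 0) ∧
  ∀ T : Finset N, T.Nonempty → i ∉ T →
    (insert i T ∈ C ↔ T ∈ C) ∧
    ∀ (hiT : insert i T ∈ C) (hT : T ∈ C), v ⟨insert i T, hiT⟩ = v ⟨T, hT⟩

/-! Grouping the facilities of a representation `(ψ, γ)` of `v` by their user-sets gives the
coordinates of `v` in the MM-basis `{w_S}`: `v = ∑_S (∑_{ψ⁻¹(k) = S} γ(k)) w_S`, and `τ(ψ, γ)`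
splits each coordinate equally among the members of its coalition. Under full span these
coordinates depend linearly on `v` alone, so `τ(ψ, γ)` is the image of `v` under a fixed linear map. -/

open Matrix

noncomputable def FullSpan.basis {N : Type} [DecidableEq N] {C : Finset (Finset N)}
    (hfs : FullSpan C) : Module.Basis {S // S ∈ C} ℝ ({T // T ∈ C} → ℝ) :=
  Module.Basis.mk hfs.1 hfs.2.ge

section Assignment

variable {N K : Type} [Fintype N]

lemma mem_userSet {ψ : N → Finset K} {k : K} {n : N} : n ∈ userSet ψ k ↔ k ∈ ψ n := by
  simp [userSet]

variable [DecidableEq N] {C : Finset (Finset N)}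

noncomputable def coalitionWeight (ψ : N → Finset K) (γ : K → ℝ) (S : Finset N) : ℝ :=
  ∑ k ∈ univ.biUnion ψ with userSet ψ k = S, γ k

noncomputable def equalShareMatrix (C : Finset (Finset N)) : Matrix N {S // S ∈ C} ℝ :=
  fun n S => if n ∈ S.1 then (S.1.card : ℝ)⁻¹ else 0

lemma sum_facilities_eq_sum_coalitionWeight {ψ : N → Finset K} (γ : K → ℝ)
    (hC : ∀ k ∈ univ.biUnion ψ, userSet ψ k ∈ C) (F : Finset N → ℝ) :
    ∑ k ∈ univ.biUnion ψ, F (userSet ψ k) * γ k =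
      ∑ S : {S // S ∈ C}, F S.1 * coalitionWeight ψ γ S.1 := by
  rw [sum_coe_sort C (fun S => F S * coalitionWeight ψ γ S),
    ← sum_fiberwise_of_maps_to hC]
  refine sum_congr rfl fun S _ => ?_
  rw [coalitionWeight, mul_sum]
  exact sum_congr rfl fun k hk => by rw [(mem_filter.1 hk).2]

lemma IsRep.eq_sum_coalitionWeight_smul_mmGame {v : {T // T ∈ C} → ℝ} {ψ : N → Finset K}
    {γ : K → ℝ} (h : IsRep C v ψ γ) :
    v = ∑ S : {S // S ∈ C}, coalitionWeight ψ γ S.1 • mmGame C S.1 := by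
  funext T
  have hfacilities : T.1.biUnion ψ =
      (univ.biUnion ψ).filter fun k => (userSet ψ k ∩ T.1).Nonempty := by
    ext k
    simp only [mem_filter, mem_biUnion, mem_univ, true_and, Finset.Nonempty, mem_inter,
      mem_userSet]
    exact ⟨fun ⟨n, hn, hk⟩ => ⟨⟨n, hk⟩, n, hk, hn⟩, fun ⟨_, n, hk, hn⟩ => ⟨n, hn, hk⟩⟩
  simp only [h.2 T, hfacilities, sum_filter, Finset.sum_apply, Pi.smul_apply, smul_eq_mul]
  simpa [mmGame, mul_comm] using sum_facilities_eq_sum_coalitionWeight γ h.1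
    (fun S => if (S ∩ T.1).Nonempty then 1 else 0)

lemma tau_eq_equalShareMatrix_mulVec {ψ : N → Finset K} (γ : K → ℝ)
    (hC : ∀ k ∈ univ.biUnion ψ, userSet ψ k ∈ C) :
    tau ψ γ = equalShareMatrix C *ᵥ fun S => coalitionWeight ψ γ S.1 := by
  funext n
  have hfacilities : ψ n = (univ.biUnion ψ).filter fun k => n ∈ userSet ψ k := by
    ext k
    simp only [mem_filter, mem_biUnion, mem_univ, true_and, mem_userSet]
    exact ⟨fun hk => ⟨⟨n, hk⟩, hk⟩, And.right⟩
  rw [tau, hfacilities, sum_filter, mulVec, dotProduct]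
  simpa [equalShareMatrix, div_eq_inv_mul] using sum_facilities_eq_sum_coalitionWeight γ hC
    (fun S => if n ∈ S then (S.card : ℝ)⁻¹ else 0)

lemma IsRep.tau_eq (hfs : FullSpan C) {v : {T // T ∈ C} → ℝ} {ψ : N → Finset K} {γ : K → ℝ}
    (h : IsRep C v ψ γ) : tau ψ γ = equalShareMatrix C *ᵥ hfs.basis.equivFun v := by
  have hcoords : hfs.basis.equivFun v = fun S => coalitionWeight ψ γ S.1 := by
    rw [← LinearEquiv.eq_symm_apply, Module.Basis.equivFun_symm_apply]
    simpa [FullSpan.basis] using h.eq_sum_coalitionWeight_smul_mmGame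
  rw [hcoords, tau_eq_equalShareMatrix_mulVec γ h.1]

end Assignment

theorem equitable_linear_general {N : Type} [Fintype N] [DecidableEq N]
    (C : Finset (Finset N))
    (hfs : FullSpan C) :
    (∀ (v w : {T : Finset N // T ∈ C} → ℝ)
      (Kv : Type) (ψv : N → Finset Kv) (γv : Kv → ℝ)
      (Kw : Type) (ψw : N → Finset Kw) (γw : Kw → ℝ)
      (K : Type) (ψ : N → Finset K) (γ : K → ℝ),
      IsRep C v ψv γv → IsRep C w ψw γw → IsRep C (v + w) ψ γ →
      ∀ n : N, tau ψ γ n = tau ψv γv n + tau ψw γw n) ∧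
    (∀ (v : {T : Finset N // T ∈ C} → ℝ) (c : ℝ)
      (Kv : Type) (ψv : N → Finset Kv) (γv : Kv → ℝ)
      (K : Type) (ψ : N → Finset K) (γ : K → ℝ),
      IsRep C v ψv γv → IsRep C (c • v) ψ γ →
      ∀ n : N, tau ψ γ n = c * tau ψv γv n) := by
  refine ⟨fun v w _ ψv γv _ ψw γw _ ψ γ hv hw hvw n => ?_,
    fun v c _ ψv γv _ ψ γ hv hcv n => ?_⟩
  · rw [hvw.tau_eq hfs, hv.tau_eq hfs, hw.tau_eq hfs, map_add, mulVec_add, Pi.add_apply]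
  · rw [hcv.tau_eq hfs, hv.tau_eq hfs, map_smul, mulVec_smul, Pi.smul_apply, smul_eq_mul]

/-- If `C` has full span the equitable solution
`χ : ℝ^C → ℝ^N` (with `χ(v) = τ(ψ, γ)` for any representation `(ψ, γ)` of
`v`) is linear: `χ(v + w) = χ(v) + χ(w)` and `χ(c • v) = c • χ(v)`. -/
theorem equitable_linear {N : Type} [Fintype N] [DecidableEq N] [Nonempty N]
    (C : Finset (Finset N)) (hCne : C.Nonempty)
    (hmem : ∀ S ∈ C, S.Nonempty) (hcover : ∀ n : N, ∃ S ∈ C, n ∈ S)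
    (hfs : FullSpan C) :
    (∀ (v w : {T : Finset N // T ∈ C} → ℝ)
      (Kv : Type) (ψv : N → Finset Kv) (γv : Kv → ℝ)
      (Kw : Type) (ψw : N → Finset Kw) (γw : Kw → ℝ)
      (K : Type) (ψ : N → Finset K) (γ : K → ℝ),
      IsRep C v ψv γv → IsRep C w ψw γw → IsRep C (v + w) ψ γ →
      ∀ n : N, tau ψ γ n = tau ψv γv n + tau ψw γw n) ∧
    (∀ (v : {T : Finset N // T ∈ C} → ℝ) (c : ℝ)
      (Kv : Type) (ψv : N → Finset Kv) (γv : Kv → ℝ)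
      (K : Type) (ψ : N → Finset K) (γ : K → ℝ),
      IsRep C v ψv γv → IsRep C (c • v) ψ γ →
      ∀ n : N, tau ψ γ n = c * tau ψv γv n) :=
  equitable_linear_general C hfs
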